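/- Let n ≥ 2, d ≥ 3 with d ≥ n+1, and let L be the linear map from the space of homogeneous polynomials of degree d in ℂ[x_1,…,x_n] to the space of homogeneous polynomials of degree n(d−2) defined by L(g) = Σ_{i=1}^n (∏_{j≠i} x_j^{d−2})·∂²g/∂x_i². Then the kernel of L has dimension n−1. Consequently, for the Fermat polynomial f = Σ_{i=1}^n x_i^d, the kernel of the differential dH_f of the Hessian map has dimension n−1. -/

import Mathlib

open MvPolynomial

/-- The linear map `L(g) = Σ_{i=1}^n (∏_{j≠i} x_j^{d-2})·∂²g/∂x_i²`, which computes (up to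
the nonzero scalar `(d(d-1))^{n-1}`) the differential of the Hessian map at the Fermat
polynomial `f = Σ x_i^d`. -/
noncomputable def fermatDiff (n d : ℕ) :
    MvPolynomial (Fin n) ℂ →ₗ[ℂ] MvPolynomial (Fin n) ℂ :=
  ∑ i : Fin n,
    (LinearMap.mulLeft ℂ (∏ j ∈ Finset.univ.erase i, (X j : MvPolynomial (Fin n) ℂ) ^ (d - 2))).comp
      ((pderiv (R := ℂ) i).toLinearMap.comp (pderiv i).toLinearMap)

/-!
A degree-`d` form `g` with `L g = 0` contains only the pure powers `x_i ^ d`: as `d > n`, every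
other monomial `x^a` of degree `d` has some exponent `2 ≤ a_i < d`, and the coefficient of
`x^(a - 2 e_i) · ∏_{j ≠ i} x_j^(d-2)` in `L g` is `a_i (a_i - 1)` times the coefficient of `x^a`
in `g`. On diagonal forms, `L (∑ c_i x_i^d) = d (d - 1) (∑ c_i) ∏_j x_j^(d-2)`, so the kernel is
the image of the hyperplane `∑ c_i = 0` under the injective map `c ↦ ∑ c_i x_i^d`.
-/

lemma finrank_ker_sum_proj (K ι : Type*) [Field K] [Fintype ι] :
    Module.finrank K (LinearMap.ker (∑ i, LinearMap.proj i : (ι → K) →ₗ[K] K)) =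
      Fintype.card ι - 1 := by
  classical
  cases isEmpty_or_nonempty ι with
  | inl _ => rw [Fintype.card_eq_zero, Module.finrank_zero_of_subsingleton]
  | inr hι =>
    obtain ⟨i⟩ := hι
    have hne : (∑ i, LinearMap.proj i : (ι → K) →ₗ[K] K) ≠ 0 := fun h => by
      simpa using LinearMap.congr_fun h (Pi.single i 1)
    have := Module.Dual.finrank_ker_add_one_of_ne_zero hne
    rw [Module.finrank_fintype_fun_eq_card] at this
    omega

namespace Finsupp

variable {ι : Type*}

lemma exists_one_lt_of_card_lt_degree [Fintype ι] {a : ι →₀ ℕ}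
    (h : Fintype.card ι < a.degree) : ∃ i, 1 < a i := by
  rw [degree_eq_sum] at h
  obtain ⟨i, -, hi⟩ := Finset.exists_lt_of_sum_lt (by simpa using h : ∑ _i : ι, 1 < ∑ i, a i)
  exact ⟨i, hi⟩

lemma eq_single_of_degree_le {a : ι →₀ ℕ} {i : ι} (h : a.degree ≤ a i) :
    a = single i a.degree := by
  have hai : a i = a.degree := le_antisymm (le_degree i a) h
  have hle : single i (a i) ≤ a := single_le_iff.2 le_rfl
  have hrest : (a - single i (a i)).degree = 0 := by
    have := map_add degree (a - single i (a i)) (single i (a i))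
    rw [tsub_add_cancel_of_le hle, degree_single] at this
    omega
  rw [degree_eq_zero_iff, tsub_eq_zero_iff_le] at hrest
  rw [← hai]
  exact le_antisymm hrest hle

end Finsupp

namespace MvPolynomial

variable {σ R : Type*} [CommSemiring R]

lemma coeff_pderiv_pderiv (i : σ) (m : σ →₀ ℕ) (p : MvPolynomial σ R) :
    coeff m (pderiv i (pderiv i p)) =
      coeff (m + Finsupp.single i 2) p * ((m i + 1) * (m i + 2)) := by
  classical
  rw [coeff_pderiv, coeff_pderiv, add_assoc, ← Finsupp.single_add]
  simp only [Finsupp.add_apply, Finsupp.single_eq_same, Nat.cast_add, Nat.cast_one]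
  ring

variable (R) in
noncomputable def diagonalForm [Fintype σ] (d : ℕ) : (σ → R) →ₗ[R] MvPolynomial σ R :=
  Fintype.linearCombination R fun i => X i ^ d

variable [Fintype σ]

lemma diagonalForm_apply (d : ℕ) (c : σ → R) :
    diagonalForm R d c = ∑ i, c i • X i ^ d :=
  Fintype.linearCombination_apply _ _ _

lemma diagonalForm_injective {d : ℕ} (hd : d ≠ 0) :
    Function.Injective (diagonalForm (σ := σ) R d) := by
  have hli : LinearIndependent R fun i : σ => (X i ^ d : MvPolynomial σ R) := by
    simp_rw [X_pow_eq_monomial]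
    exact (basisMonomials σ R).linearIndependent.comp _ (Finsupp.single_left_injective hd)
  exact linearIndependent_iff_injective_fintypeLinearCombination.1 hli

lemma range_diagonalForm_le (d : ℕ) :
    LinearMap.range (diagonalForm (σ := σ) R d) ≤ homogeneousSubmodule σ R d := by
  rintro _ ⟨c, rfl⟩
  rw [diagonalForm_apply]
  exact Submodule.sum_mem _ fun i _ => Submodule.smul_mem _ _ (isHomogeneous_X_pow i d)

lemma eq_diagonalForm_of_coeff_ne_zero {d : ℕ} (hd : d ≠ 0) {g : MvPolynomial σ R}
    (hg : ∀ a, coeff a g ≠ 0 → ∃ i, a = Finsupp.single i d) :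
    g = diagonalForm R d fun i => coeff (Finsupp.single i d) g := by
  classical
  ext a
  simp only [diagonalForm_apply, coeff_sum, coeff_smul, coeff_X_pow, smul_eq_mul, mul_ite,
    mul_one, mul_zero]
  by_cases ha : coeff a g = 0
  · rw [ha]
    refine (Finset.sum_eq_zero fun i _ => ?_).symm
    split_ifs with h
    · rw [h, ha]
    · rfl
  · obtain ⟨j, rfl⟩ := hg a ha
    rw [Finset.sum_eq_single j
      (fun i _ hij => if_neg fun h => hij (Finsupp.single_left_injective hd h)) (by simp),
      if_pos rfl]

section Cofactor

variable [DecidableEq σ]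

noncomputable def cofactorExponent (k : ℕ) (i : σ) : σ →₀ ℕ :=
  ∑ j ∈ Finset.univ.erase i, Finsupp.single j k

lemma cofactorExponent_apply (k : ℕ) (i j : σ) :
    cofactorExponent k i j = if j = i then 0 else k := by
  simp [cofactorExponent, Finsupp.finsetSum_apply, Finsupp.single_apply]

lemma prod_erase_X_pow (k : ℕ) (i : σ) :
    ∏ j ∈ Finset.univ.erase i, (X j : MvPolynomial σ R) ^ k =
      monomial (cofactorExponent k i) 1 := by
  simp [cofactorExponent, monomial_sum_one, X_pow_eq_monomial]

end Cofactor

end MvPolynomial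

section Fermat

open Finsupp

variable {n d : ℕ}

-- Only the `i`-th summand of `L` contributes: the cofactor of any `k ≠ i` has exponent
-- `d - 2 > m i` in `x_i`.
lemma coeff_add_cofactorExponent_fermatDiff (g : MvPolynomial (Fin n) ℂ) (m : Fin n →₀ ℕ)
    (i : Fin n) (hm : m i + 2 < d) :
    coeff (m + cofactorExponent (d - 2) i) (fermatDiff n d g) =
      coeff (m + single i 2) g * ((m i + 1) * (m i + 2)) := by
  rw [fermatDiff, LinearMap.sum_apply, coeff_sum]
  simp only [LinearMap.comp_apply, LinearMap.mulLeft_apply, Derivation.coeFn_coe,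
    prod_erase_X_pow]
  rw [Finset.sum_eq_single i, add_comm m, coeff_monomial_mul, one_mul, coeff_pderiv_pderiv]
  · intro k _ hki
    rw [coeff_monomial_mul', if_neg]
    intro hle
    have := hle i
    simp only [cofactorExponent_apply, Finsupp.add_apply, if_neg hki.symm, ↓reduceIte,
      add_zero] at this
    omega
  · simp

lemma coeff_eq_zero_of_fermatDiff_eq_zero {g : MvPolynomial (Fin n) ℂ}
    (hg : fermatDiff n d g = 0) {a : Fin n →₀ ℕ} {i : Fin n} (h2 : 2 ≤ a i) (hlt : a i < d) :
    coeff a g = 0 := by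
  obtain ⟨m, rfl⟩ : ∃ m, a = m + single i 2 :=
    ⟨a - single i 2, (tsub_add_cancel_of_le (single_le_iff.2 h2)).symm⟩
  have hcoeff := coeff_add_cofactorExponent_fermatDiff g m i (by simpa using hlt)
  rw [hg, coeff_zero, eq_comm, mul_eq_zero] at hcoeff
  refine hcoeff.resolve_right (mul_ne_zero (Nat.cast_add_one_ne_zero _) ?_)
  exact_mod_cast (m i + 1).succ_ne_zero

lemma exists_eq_single_of_coeff_ne_zero {g : MvPolynomial (Fin n) ℂ}
    (hhom : g.IsHomogeneous d) (hg : fermatDiff n d g = 0) (hnd : n < d) {a : Fin n →₀ ℕ}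
    (ha : coeff a g ≠ 0) :
    ∃ i, a = single i d := by
  have hdeg : a.degree = d := by rw [degree_eq_weight_one]; exact hhom ha
  obtain ⟨i, hi⟩ := a.exists_one_lt_of_card_lt_degree (by simpa [hdeg] using hnd)
  refine ⟨i, hdeg ▸ a.eq_single_of_degree_le ?_⟩
  by_contra! hlt
  exact ha (coeff_eq_zero_of_fermatDiff_eq_zero hg hi (hdeg ▸ hlt))

lemma fermatDiff_X_pow (i : Fin n) :
    fermatDiff n d (X i ^ d) =
      (d * (d - 1) : ℕ) • ∏ j, (X j : MvPolynomial (Fin n) ℂ) ^ (d - 2) := by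
  rw [fermatDiff, LinearMap.sum_apply]
  simp only [LinearMap.comp_apply, LinearMap.mulLeft_apply, Derivation.coeFn_coe]
  rw [Finset.sum_eq_single i]
  · rw [← Finset.prod_erase_mul _ _ (Finset.mem_univ i)]
    simp only [Derivation.leibniz_pow, pderiv_X, Pi.single_eq_same, smul_eq_mul, mul_one,
      nsmul_eq_mul, Derivation.leibniz, Derivation.map_natCast, mul_zero, add_zero, Nat.cast_mul]
    rw [show d - 1 - 1 = d - 2 by omega]
    ring
  · intro k _ hki
    simp [pderiv_X_of_ne hki.symm]
  · simp

lemma fermatDiff_comp_diagonalForm :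
    fermatDiff n d ∘ₗ diagonalForm ℂ d =
      LinearMap.toSpanSingleton ℂ _
          ((d * (d - 1) : ℕ) • ∏ j, (X j : MvPolynomial (Fin n) ℂ) ^ (d - 2)) ∘ₗ
        ∑ i, LinearMap.proj i := by
  refine LinearMap.ext fun c => ?_
  simp [diagonalForm_apply, fermatDiff_X_pow]

lemma ker_fermatDiff_comp_diagonalForm (hd : 2 ≤ d) :
    LinearMap.ker (fermatDiff n d ∘ₗ diagonalForm ℂ d) =
      LinearMap.ker (∑ i, LinearMap.proj i) := by
  have hne : (d * (d - 1) : ℕ) • ∏ j, (X j : MvPolynomial (Fin n) ℂ) ^ (d - 2) ≠ 0 :=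
    smul_ne_zero (Nat.mul_ne_zero (by omega) (by omega))
      (Finset.prod_ne_zero_iff.2 fun j _ => pow_ne_zero _ (X_ne_zero j))
  rw [fermatDiff_comp_diagonalForm, LinearMap.ker_comp, LinearMap.ker_toSpanSingleton ℂ hne,
    Submodule.comap_bot]

lemma homogeneousSubmodule_inf_ker_fermatDiff (hd : 2 ≤ d) (hnd : n < d) :
    homogeneousSubmodule (Fin n) ℂ d ⊓ LinearMap.ker (fermatDiff n d) =
      (LinearMap.ker (∑ i, LinearMap.proj i)).map (diagonalForm ℂ d) := by
  have hsub : homogeneousSubmodule (Fin n) ℂ d ⊓ LinearMap.ker (fermatDiff n d) ≤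
      LinearMap.range (diagonalForm ℂ d) := by
    rintro g ⟨hhom, hg⟩
    exact ⟨_, (eq_diagonalForm_of_coeff_ne_zero (by omega) fun a =>
      exists_eq_single_of_coeff_ne_zero hhom hg hnd).symm⟩
  calc homogeneousSubmodule (Fin n) ℂ d ⊓ LinearMap.ker (fermatDiff n d)
      = LinearMap.range (diagonalForm ℂ d) ⊓ LinearMap.ker (fermatDiff n d) :=
        le_antisymm (le_inf hsub inf_le_right) (inf_le_inf_right _ (range_diagonalForm_le d))
    _ = _ := by
      rw [← Submodule.map_comap_eq, ← LinearMap.ker_comp, ker_fermatDiff_comp_diagonalForm hd]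

end Fermat

theorem ker_differential_fermat_large_degree (n d : ℕ) (hd : 3 ≤ d)
    (hdn : n + 1 ≤ d) :
    Module.finrank ℂ
        ↥(homogeneousSubmodule (Fin n) ℂ d ⊓ LinearMap.ker (fermatDiff n d)) = n - 1 := by
  rw [homogeneousSubmodule_inf_ker_fermatDiff (by omega) hdn,
    ← (Submodule.equivMapOfInjective _ (diagonalForm_injective (by omega)) _).finrank_eq,
    finrank_ker_sum_proj, Fintype.card_fin]
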